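/- Let A be an n×n matrix over ℝ∪{−∞} with max-plus spectral radius λ > −∞, let h ∈ ℝⁿ be regular, and let g ∈ (ℝ∪{−∞})ⁿ with g_i ≤ h_i for all i. Then the minimum over all x ∈ ℝⁿ satisfying g_i ≤ x_i ≤ h_i for all i of G(x) = max_{1≤i,j≤n}(A_{ij} + x_j − x_i) equals θ = max( λ , max_{1≤m≤n} (1/m)·max_{1≤i,j≤n}( (A^m)_{ij} + g_j − h_i ) ), and this minimum is attained by some feasible x. -/

import Mathlib

/-!
Normalise by a real `c`: `G(x) ≤ c` says exactly that `x` is a subeigenvector of `B = A − c`,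
`B_ij + x_j ≤ x_i`. Iterating gives `(B^m)_ij + x_j ≤ x_i` for all `m`, so every cycle of `B` is
nonpositive (`λ ≤ c`) and, as `g ≤ x ≤ h`, `(B^m)_ij + g_j ≤ h_i` (the boundary terms are `≤ c`);
hence `θ ≤ G(x)`. Conversely, for `c = θ` these two conditions hold. Nonpositive cycles let every
path of length `≥ n` be shortened by cutting out a cycle, so all powers of `B` are dominated by the
Kleene star `S = ⊕_{m<n} B^m`, and `B ⊗ S ≤ S`. Then `x = S ⊗ (g ⊕ (h − c'))` with `c'` large is
a real subeigenvector with `g ≤ x ≤ h`, i.e. a feasible point with `G(x) ≤ θ`.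
-/

/-- Max-plus matrix product: (A⊗B)_{ij} = max_k (A_{ik} + B_{kj}). -/
noncomputable def mmul {n : ℕ} (A B : Fin n → Fin n → WithBot ℝ) :
    Fin n → Fin n → WithBot ℝ :=
  fun i j => Finset.univ.sup fun k => A i k + B k j

/-- Max-plus matrix powers, with A⁰ = I (0 on the diagonal, −∞ elsewhere). -/
noncomputable def mpow {n : ℕ} (A : Fin n → Fin n → WithBot ℝ) :
    ℕ → Fin n → Fin n → WithBot ℝ
  | 0 => fun i j => if i = j then (0 : WithBot ℝ) else ⊥
  | m + 1 => mmul (mpow A m) A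

/-- Kleene star: (A*)_{ij} = max_{0 ≤ m ≤ n−1} (A^m)_{ij}. -/
noncomputable def mstar {n : ℕ} (A : Fin n → Fin n → WithBot ℝ) :
    Fin n → Fin n → WithBot ℝ :=
  fun i j => (Finset.range n).sup fun m => mpow A m i j

/-- Max-plus spectral radius (maximum cycle mean):
λ = max_{1 ≤ m ≤ n} (1/m)·max_i (A^m)_{ii}, computed in ℝ ∪ {−∞}. -/
noncomputable def specRad {n : ℕ} (A : Fin n → Fin n → WithBot ℝ) : WithBot ℝ :=
  (Finset.Icc 1 n).sup fun m =>
    WithBot.map (fun r => r / (m : ℝ)) (Finset.univ.sup fun i => mpow A m i i)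

namespace MaxPlus

open Finset

section WithBotReal

lemma add_coe_le_coe_iff {x : WithBot ℝ} {a b : ℝ} :
    x + (a : WithBot ℝ) ≤ (b : WithBot ℝ) ↔ x ≤ ((b - a : ℝ) : WithBot ℝ) := by
  cases x with
  | bot => simp
  | coe x =>
    rw [← WithBot.coe_add, WithBot.coe_le_coe, WithBot.coe_le_coe]
    constructor <;> intro <;> linarith

lemma finset_sup_add {ι : Type*} (s : Finset ι) (f : ι → WithBot ℝ) (a : WithBot ℝ) :
    s.sup f + a = s.sup fun i => f i + a :=
  apply_sup_eq_sup_comp_of_linearOrder (· + a) (fun _ _ h => add_le_add h le_rfl)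
    (WithBot.bot_add a)

lemma add_finset_sup {ι : Type*} (s : Finset ι) (f : ι → WithBot ℝ) (a : WithBot ℝ) :
    a + s.sup f = s.sup fun i => a + f i :=
  apply_sup_eq_sup_comp_of_linearOrder (a + ·) (fun _ _ h => add_le_add le_rfl h)
    (WithBot.add_bot a)

lemma map_div_le_coe_iff {m : ℕ} (hm : 0 < m) {s : WithBot ℝ} {c : ℝ} :
    WithBot.map (fun r => r / (m : ℝ)) s ≤ (c : WithBot ℝ) ↔ s ≤ ((m * c : ℝ) : WithBot ℝ) := by
  cases s with
  | bot => simp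
  | coe s =>
    rw [WithBot.map_coe, WithBot.coe_le_coe, WithBot.coe_le_coe, div_le_iff₀ (by positivity),
      mul_comm]

lemma exists_coe_upper_bound {ι : Type*} [Finite ι] (f : ι → WithBot ℝ) :
    ∃ c : ℝ, ∀ i, f i ≤ c := by
  obtain ⟨M, hM⟩ := (Set.finite_range f).bddAbove
  exact ⟨M.unbotD 0, fun i => (hM ⟨i, rfl⟩).trans (WithBot.le_coe_unbotD M 0)⟩

end WithBotReal

variable {n : ℕ}

def shift (A : Fin n → Fin n → WithBot ℝ) (c : ℝ) : Fin n → Fin n → WithBot ℝ :=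
  fun i j => A i j + c

def objective (A : Fin n → Fin n → WithBot ℝ) (x : Fin n → ℝ) : WithBot ℝ :=
  univ.sup fun i => univ.sup fun j => A i j + ((x j - x i : ℝ) : WithBot ℝ)

noncomputable def boundaryRad (A : Fin n → Fin n → WithBot ℝ) (g : Fin n → WithBot ℝ)
    (h : Fin n → ℝ) : WithBot ℝ :=
  (Icc 1 n).sup fun m => WithBot.map (fun r => r / (m : ℝ))
    (univ.sup fun i => univ.sup fun j => mpow A m i j + g j + ((-(h i) : ℝ) : WithBot ℝ))

lemma mpow_succ_apply (B : Fin n → Fin n → WithBot ℝ) (m : ℕ) (i j : Fin n) :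
    mpow B (m + 1) i j = univ.sup fun k => mpow B m i k + B k j :=
  rfl

lemma mpow_shift (A : Fin n → Fin n → WithBot ℝ) (c : ℝ) (m : ℕ) (i j : Fin n) :
    mpow (shift A c) m i j = mpow A m i j + ((m * c : ℝ) : WithBot ℝ) := by
  induction m generalizing j with
  | zero => by_cases hij : i = j <;> simp [mpow, hij]
  | succ m ih =>
    simp only [mpow_succ_apply, finset_sup_add, ih, shift]
    refine sup_congr rfl fun k _ => ?_
    rw [add_add_add_comm, ← WithBot.coe_add]
    congr 2
    push_cast
    ring

lemma add_mpow_le_mpow_succ (B : Fin n → Fin n → WithBot ℝ) (m : ℕ) (i j k : Fin n) :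
    B i j + mpow B m j k ≤ mpow B (m + 1) i k := by
  induction m generalizing k with
  | zero =>
    by_cases hjk : j = k
    · subst hjk
      rw [mpow_succ_apply]
      exact le_sup_of_le (mem_univ i) (by simp [mpow])
    · simp [mpow, hjk]
  | succ m ih =>
    rw [mpow_succ_apply, add_finset_sup]
    refine Finset.sup_le fun l _ => ?_
    calc B i j + (mpow B m j l + B l k) = (B i j + mpow B m j l) + B l k := (add_assoc ..).symm
      _ ≤ mpow B (m + 1) i l + B l k := by gcongr; exact ih l
      _ ≤ mpow B (m + 1 + 1) i k := le_sup (f := fun l => mpow B (m + 1) i l + B l k) (mem_univ l)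

lemma mpow_add_le_of_add_le {B : Fin n → Fin n → WithBot ℝ} {x : Fin n → WithBot ℝ}
    (hx : ∀ i j, B i j + x j ≤ x i) (m : ℕ) (i j : Fin n) : mpow B m i j + x j ≤ x i := by
  induction m generalizing j with
  | zero => by_cases hij : i = j <;> simp [mpow, hij]
  | succ m ih =>
    rw [mpow_succ_apply, finset_sup_add]
    refine Finset.sup_le fun k _ => ?_
    calc mpow B m i k + B k j + x j = mpow B m i k + (B k j + x j) := add_assoc ..
      _ ≤ mpow B m i k + x k := by gcongr; exact hx k j
      _ ≤ x i := ih k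

noncomputable def pathWeight (B : Fin n → Fin n → WithBot ℝ) (p : ℕ → Fin n) (a b : ℕ) :
    WithBot ℝ :=
  ∑ t ∈ Ico a b, B (p t) (p (t + 1))

lemma pathWeight_le_mpow (B : Fin n → Fin n → WithBot ℝ) (p : ℕ → Fin n) (a d : ℕ) :
    pathWeight B p a (a + d) ≤ mpow B d (p a) (p (a + d)) := by
  induction d with
  | zero => simp [pathWeight, mpow]
  | succ d ih =>
    rw [← add_assoc, pathWeight, sum_Ico_succ_top (by omega), mpow_succ_apply]
    calc _ ≤ mpow B d (p a) (p (a + d)) + B (p (a + d)) (p (a + d + 1)) := by gcongr; exact ih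
      _ ≤ _ := le_sup (f := fun k => mpow B d (p a) k + B k (p (a + d + 1))) (mem_univ _)

lemma exists_path_of_mpow_ne_bot {B : Fin n → Fin n → WithBot ℝ} {m : ℕ} {i j : Fin n}
    (hne : mpow B m i j ≠ ⊥) :
    ∃ p : ℕ → Fin n, p 0 = i ∧ p m = j ∧ mpow B m i j ≤ pathWeight B p 0 m := by
  induction m generalizing j with
  | zero =>
    obtain rfl : i = j := by
      by_contra hij
      exact hne (by simp [mpow, hij])
    exact ⟨fun _ => i, rfl, rfl, by simp [mpow, pathWeight]⟩
  | succ m ih =>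
    obtain ⟨k, -, hk⟩ := exists_mem_eq_sup univ ⟨i, mem_univ i⟩ fun k => mpow B m i k + B k j
    rw [mpow_succ_apply, hk] at hne ⊢
    obtain ⟨p, hp0, hpm, hp⟩ := ih (WithBot.add_ne_bot.1 hne).1
    refine ⟨Function.update p (m + 1) j, by simp [hp0], by simp, ?_⟩
    have hprefix : pathWeight B (Function.update p (m + 1) j) 0 m = pathWeight B p 0 m :=
      sum_congr rfl fun t ht => by
        rw [mem_Ico] at ht
        rw [Function.update_of_ne (by omega), Function.update_of_ne (by omega)]
    rw [pathWeight, sum_Ico_succ_top (Nat.zero_le m), ← pathWeight, hprefix,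
      Function.update_self, Function.update_of_ne (by omega), hpm]
    gcongr

lemma exists_lt_le_map_eq (p : ℕ → Fin n) : ∃ a b, a < b ∧ b ≤ n ∧ p a = p b := by
  obtain ⟨x, y, hxy, hp⟩ :=
    Fintype.exists_ne_map_eq_of_card_lt (fun t : Fin (n + 1) => p t) (by simp)
  rcases lt_or_gt_of_ne (Fin.val_ne_of_ne hxy) with h | h
  · exact ⟨x, y, h, by omega, hp⟩
  · exact ⟨y, x, h, by omega, hp.symm⟩

def CyclesNonpos (B : Fin n → Fin n → WithBot ℝ) : Prop :=
  ∀ d ∈ Icc 1 n, ∀ q, mpow B d q q ≤ 0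

section CyclesNonpos

variable {B : Fin n → Fin n → WithBot ℝ}

lemma exists_shorter_path (hcyc : CyclesNonpos B) {m : ℕ} (hm : n ≤ m) (p : ℕ → Fin n) :
    ∃ q : ℕ → Fin n, ∃ m' < m,
      q 0 = p 0 ∧ q m' = p m ∧ pathWeight B p 0 m ≤ pathWeight B q 0 m' := by
  obtain ⟨a, b, hab, hbn, hpab⟩ := exists_lt_le_map_eq p
  obtain ⟨d, rfl⟩ : ∃ d, b = a + d := ⟨b - a, by omega⟩
  -- `q` follows `p` but skips the cycle `p a, …, p (a + d) = p a`.
  set q : ℕ → Fin n := fun t => if t ≤ a then p t else p (t + d)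
  have hq : ∀ t, a ≤ t → q t = p (t + d) := by
    intro t ht
    rcases ht.eq_or_lt with rfl | ht
    · simp [q, hpab]
    · simp [q, Nat.not_le.2 ht]
  have hcycle : pathWeight B p a (a + d) ≤ 0 := by
    have := pathWeight_le_mpow B p a d
    rw [← hpab] at this
    exact this.trans (hcyc d (mem_Icc.2 ⟨by omega, by omega⟩) (p a))
  refine ⟨q, m - d, by omega, by simp [q], by rw [hq _ (by omega)]; congr 1; omega, ?_⟩
  have hsplit_p : pathWeight B p 0 m
      = pathWeight B p 0 a + pathWeight B p a (a + d) + pathWeight B p (a + d) m := by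
    simp only [pathWeight]
    rw [sum_Ico_consecutive _ (by omega) (by omega), sum_Ico_consecutive _ (by omega) (by omega)]
  have hsplit_q : pathWeight B q 0 (m - d) = pathWeight B p 0 a + pathWeight B p (a + d) m := by
    simp only [pathWeight]
    rw [← sum_Ico_consecutive _ (Nat.zero_le a) (by omega : a ≤ m - d)]
    congr 1
    · refine sum_congr rfl fun t ht => ?_
      rw [mem_Ico] at ht
      simp [q, ht.2.le, Nat.succ_le_of_lt ht.2]
    · have hshift := sum_Ico_add' (fun t => B (p t) (p (t + 1))) a (m - d) d
      rw [Nat.sub_add_cancel (by omega)] at hshift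
      rw [← hshift]
      refine sum_congr rfl fun t ht => ?_
      rw [mem_Ico] at ht
      rw [hq t ht.1, hq (t + 1) (by omega), Nat.add_right_comm]
  rw [hsplit_p, hsplit_q]
  calc _ ≤ pathWeight B p 0 a + 0 + pathWeight B p (a + d) m := by gcongr
    _ = _ := by rw [add_zero]

lemma pathWeight_le_mstar (hcyc : CyclesNonpos B) (m : ℕ) (p : ℕ → Fin n) :
    pathWeight B p 0 m ≤ mstar B (p 0) (p m) := by
  induction m using Nat.strong_induction_on generalizing p with
  | _ m ih =>
  rcases lt_or_ge m n with hm | hm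
  · calc pathWeight B p 0 m ≤ mpow B m (p 0) (p m) := by simpa using pathWeight_le_mpow B p 0 m
      _ ≤ mstar B (p 0) (p m) := le_sup (f := fun k => mpow B k (p 0) (p m)) (mem_range.2 hm)
  · obtain ⟨q, m', hm', hq0, hqm, hpq⟩ := exists_shorter_path hcyc hm p
    calc pathWeight B p 0 m ≤ pathWeight B q 0 m' := hpq
      _ ≤ mstar B (q 0) (q m') := ih m' hm' q
      _ = mstar B (p 0) (p m) := by rw [hq0, hqm]

lemma mpow_le_mstar (hcyc : CyclesNonpos B) (m : ℕ) (i j : Fin n) : mpow B m i j ≤ mstar B i j := by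
  by_cases hne : mpow B m i j = ⊥
  · simp [hne]
  obtain ⟨p, rfl, rfl, hp⟩ := exists_path_of_mpow_ne_bot hne
  exact hp.trans (pathWeight_le_mstar hcyc m p)

lemma add_mstar_le (hcyc : CyclesNonpos B) (i j k : Fin n) : B i j + mstar B j k ≤ mstar B i k := by
  rw [mstar, add_finset_sup]
  exact Finset.sup_le fun m _ =>
    (add_mpow_le_mpow_succ B m i j k).trans (mpow_le_mstar hcyc _ _ _)

end CyclesNonpos

lemma zero_le_mstar_self (B : Fin n → Fin n → WithBot ℝ) (i : Fin n) : 0 ≤ mstar B i i :=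
  le_sup_of_le (f := fun m => mpow B m i i) (mem_range.2 i.pos) (by simp [mpow])

lemma mstar_add_le {B : Fin n → Fin n → WithBot ℝ} {g : Fin n → WithBot ℝ} {h : Fin n → ℝ}
    (hgh : ∀ i, g i ≤ h i) (hbd : ∀ m ∈ Icc 1 n, ∀ i j, mpow B m i j + g j ≤ h i)
    (i k : Fin n) : mstar B i k + g k ≤ h i := by
  rw [mstar, finset_sup_add]
  refine Finset.sup_le fun m hm => ?_
  rw [mem_range] at hm
  rcases m with _ | m
  · by_cases hik : i = k
    · subst hik
      simpa [mpow] using hgh i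
    · simp [mpow, hik]
  · exact hbd (m + 1) (mem_Icc.2 ⟨by omega, by omega⟩) i k

lemma exists_subeigenvector_between {B : Fin n → Fin n → WithBot ℝ} {g : Fin n → WithBot ℝ}
    {h : Fin n → ℝ} (hcyc : CyclesNonpos B) (hgh : ∀ i, g i ≤ h i)
    (hbd : ∀ m ∈ Icc 1 n, ∀ i j, mpow B m i j + g j ≤ h i) :
    ∃ x : Fin n → ℝ, (∀ i, g i ≤ x i ∧ x i ≤ h i) ∧ ∀ i j, B i j + x j ≤ x i := by
  obtain ⟨c, hc⟩ := exists_coe_upper_bound fun ik : Fin n × Fin n =>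
    mstar B ik.1 ik.2 + ((h ik.2 - h ik.1 : ℝ) : WithBot ℝ)
  -- `x = S ⊗ y` with `S = B*`: a subeigenvector because `B ⊗ S ≤ S`, real because `y` is,
  -- and below `h` by the choice of `c`.
  set y : Fin n → WithBot ℝ := fun k => g k ⊔ ((h k - c : ℝ) : WithBot ℝ)
  set x : Fin n → WithBot ℝ := fun i => univ.sup fun k => mstar B i k + y k
  have hyx : ∀ i, y i ≤ x i := fun i =>
    le_sup_of_le (mem_univ i) (le_add_of_nonneg_left (zero_le_mstar_self B i))
  have hxh : ∀ i, x i ≤ h i := fun i => Finset.sup_le fun k _ => by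
    rw [← max_add_add_left]
    refine max_le (mstar_add_le hgh hbd i k) ?_
    have := hc (i, k)
    rw [add_coe_le_coe_iff] at this ⊢
    convert this using 2
    ring
  have hBx : ∀ i j, B i j + x j ≤ x i := fun i j => by
    rw [add_finset_sup]
    exact Finset.sup_le fun k _ => by
      rw [← add_assoc]
      exact le_sup_of_le (mem_univ k) (add_le_add (add_mstar_le hcyc i j k) le_rfl)
  have hx_ne : ∀ i, x i ≠ ⊥ := fun i => ne_bot_of_le_ne_bot (by simp [y]) (hyx i)
  choose xr hxr using fun i => WithBot.ne_bot_iff_exists.1 (hx_ne i)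
  refine ⟨xr, fun i => ⟨?_, ?_⟩, fun i j => ?_⟩
  · rw [hxr]
    exact le_sup_left.trans (hyx i)
  · rw [← WithBot.coe_le_coe, hxr]
    exact hxh i
  · rw [hxr, hxr]
    exact hBx i j

lemma specRad_le_coe_iff (A : Fin n → Fin n → WithBot ℝ) (c : ℝ) :
    specRad A ≤ c ↔ CyclesNonpos (shift A (-c)) := by
  simp only [specRad, CyclesNonpos, Finset.sup_le_iff, mpow_shift]
  refine forall₂_congr fun m hm => ?_
  rw [map_div_le_coe_iff (mem_Icc.1 hm).1, Finset.sup_le_iff]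
  simp only [mem_univ, true_implies]
  refine forall_congr' fun i => ?_
  rw [← WithBot.coe_zero, add_coe_le_coe_iff]
  ring_nf

lemma boundaryRad_le_coe_iff (A : Fin n → Fin n → WithBot ℝ) (g : Fin n → WithBot ℝ)
    (h : Fin n → ℝ) (c : ℝ) :
    boundaryRad A g h ≤ c ↔ ∀ m ∈ Icc 1 n, ∀ i j, mpow (shift A (-c)) m i j + g j ≤ h i := by
  simp only [boundaryRad, Finset.sup_le_iff, mpow_shift]
  refine forall₂_congr fun m hm => ?_
  rw [map_div_le_coe_iff (mem_Icc.1 hm).1]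
  simp only [Finset.sup_le_iff, mem_univ, true_implies]
  refine forall₂_congr fun i j => ?_
  rw [add_coe_le_coe_iff, add_right_comm, add_coe_le_coe_iff]
  ring_nf

lemma objective_le_coe_iff (A : Fin n → Fin n → WithBot ℝ) (x : Fin n → ℝ) (c : ℝ) :
    objective A x ≤ c ↔ ∀ i j, shift A (-c) i j + x j ≤ x i := by
  simp only [objective, shift, Finset.sup_le_iff, mem_univ, true_implies]
  refine forall₂_congr fun i j => ?_
  rw [add_coe_le_coe_iff, add_assoc, ← WithBot.coe_add, add_coe_le_coe_iff]
  ring_nf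

lemma cyclesNonpos_of_subeigenvector {B : Fin n → Fin n → WithBot ℝ} {x : Fin n → ℝ}
    (hx : ∀ i j, B i j + x j ≤ x i) : CyclesNonpos B := fun d _ q => by
  have := mpow_add_le_of_add_le hx d q q
  rwa [add_coe_le_coe_iff, sub_self, WithBot.coe_zero] at this

lemma specRad_sup_boundaryRad_le_objective {A : Fin n → Fin n → WithBot ℝ}
    {g : Fin n → WithBot ℝ} {h x : Fin n → ℝ}
    (hx : ∀ i, g i ≤ x i ∧ x i ≤ h i) :
    specRad A ⊔ boundaryRad A g h ≤ objective A x := by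
  refine WithBot.forall_le_coe_iff_le.1 fun c hc => ?_
  rw [objective_le_coe_iff] at hc
  rw [sup_le_iff, specRad_le_coe_iff, boundaryRad_le_coe_iff]
  refine ⟨cyclesNonpos_of_subeigenvector hc, fun m _ i j => ?_⟩
  calc mpow (shift A (-c)) m i j + g j ≤ mpow (shift A (-c)) m i j + x j := by
        gcongr; exact (hx j).1
    _ ≤ x i := mpow_add_le_of_add_le hc m i j
    _ ≤ h i := WithBot.coe_le_coe.2 (hx i).2

end MaxPlus

/-- Boundary-constrained minimization of G(x) = max_{i,j}(A_{ij} + x_j − x_i) over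
regular x with g ≤ x ≤ h: the minimum equals
θ = max(λ, max_{1≤m≤n} (1/m)·max_{i,j}((A^m)_{ij} + g_j − h_i)), and it is attained. -/
theorem stmt_18 {n : ℕ} (A : Fin n → Fin n → WithBot ℝ) (hlam : specRad A ≠ ⊥)
    (h : Fin n → ℝ) (g : Fin n → WithBot ℝ)
    (hgh : ∀ i, g i ≤ ((h i : ℝ) : WithBot ℝ)) :
    IsLeast
      {v | ∃ x : Fin n → ℝ,
        (∀ i, g i ≤ ((x i : ℝ) : WithBot ℝ) ∧ x i ≤ h i) ∧
        (Finset.univ.sup fun i => Finset.univ.sup fun j =>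
          A i j + ((x j - x i : ℝ) : WithBot ℝ)) = v}
      (specRad A ⊔
        (Finset.Icc 1 n).sup fun m =>
          WithBot.map (fun r => r / (m : ℝ))
            (Finset.univ.sup fun i => Finset.univ.sup fun j =>
              mpow A m i j + g j + ((-(h i) : ℝ) : WithBot ℝ))) := by
  change IsLeast {v | ∃ x, (∀ i, g i ≤ x i ∧ x i ≤ h i) ∧ MaxPlus.objective A x = v}
    (specRad A ⊔ MaxPlus.boundaryRad A g h)
  obtain ⟨θ, hθ⟩ := WithBot.ne_bot_iff_exists.1 (ne_bot_of_le_ne_bot hlam le_sup_left :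
    specRad A ⊔ MaxPlus.boundaryRad A g h ≠ ⊥)
  obtain ⟨hcyc, hbd⟩ : MaxPlus.CyclesNonpos (MaxPlus.shift A (-θ)) ∧
      ∀ m ∈ Finset.Icc 1 n, ∀ i j, mpow (MaxPlus.shift A (-θ)) m i j + g j ≤ h i := by
    rw [← MaxPlus.specRad_le_coe_iff, ← MaxPlus.boundaryRad_le_coe_iff, ← sup_le_iff, hθ]
  obtain ⟨x, hx, hsub⟩ := MaxPlus.exists_subeigenvector_between hcyc hgh hbd
  have hopt : MaxPlus.objective A x ≤ θ := (MaxPlus.objective_le_coe_iff A x θ).2 hsub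
  refine ⟨⟨x, hx, le_antisymm (hθ ▸ hopt) (MaxPlus.specRad_sup_boundaryRad_le_objective hx)⟩, ?_⟩
  rintro v ⟨y, hy, rfl⟩
  exact MaxPlus.specRad_sup_boundaryRad_le_objective hy
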